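/- Let {S_i}_{i∈I} be a finite family of communicating systems over pairwise disjoint participant sets, let H = {h_i}_{i∈I} be a set of interfaces for it such that every interface h_i has no mixed states, let CM be a connection model for H, and let K be a connection policy for H complying with CM. If every S_i (i ∈ I) is deadlock-free and K is deadlock-free, then the multicomposition MC({S_i}_{i∈I}, K) is deadlock-free. -/

import Mathlib

namespace CFSM

/-- Direction of a communication action: output (`!`) or input (`?`). -/
inductive Dir : Type where
  | out : Dir
  | inp : Dir
deriving DecidableEq

instance : Fintype Dir where
  elems := {Dir.out, Dir.inp}
  complete := by intro x; cases x <;> simp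

/-- An action `pq!a` (output) or `pq?a` (input) over participants `P` and messages `A`:
`snd` is the sender `p`, `rcv` the receiver `q`, `msg` the message `a`. -/
structure Act (P : Type) (A : Type) : Type where
  snd : P
  rcv : P
  dir : Dir
  msg : A

instance {P A : Type} [Finite P] [Finite A] : Finite (Act P A) :=
  Finite.of_injective (fun l => (l.snd, l.rcv, l.dir, l.msg))
    (fun a b h => by
      cases a; cases b
      simp only [Prod.mk.injEq] at h
      obtain ⟨h1, h2, h3, h4⟩ := h
      subst h1; subst h2; subst h3; subst h4; rfl)

/-- The subject of an action: the sender of an output, the receiver of an input. -/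
def Act.subject {P A : Type} (l : Act P A) : P :=
  match l.dir with
  | .out => l.snd
  | .inp => l.rcv

/-- A communicating system over participants `P` and messages `A`:
one machine (state type, initial state and transition relation) per participant. -/
structure CS (P : Type) (A : Type) : Type 1 where
  St : P → Type
  init : ∀ p, St p
  delta : ∀ p, Set (St p × Act P A × St p)

/-- All actions of the machine of participant `p` have subject `p`
(the name of the machine) and distinct endpoints. -/
def CS.WellFormed {P A : Type} (S : CS P A) : Prop :=
  ∀ p t, t ∈ S.delta p → ((t.2.1 : Act P A).subject = p ∧ t.2.1.snd ≠ t.2.1.rcv)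

/-- A configuration: a local state for each machine and a FIFO buffer
for each ordered pair of participants. -/
structure Config {P A : Type} (S : CS P A) : Type where
  st : ∀ p, S.St p
  ch : P → P → List A

/-- The initial configuration: all machines in their initial state, all channels empty. -/
def CS.initConfig {P A : Type} (S : CS P A) : Config S :=
  ⟨S.init, fun _ _ => []⟩

/-- The labelled transition relation between configurations. -/
def StepL {P A : Type} (S : CS P A) (c : Config S) (l : Act P A) (c' : Config S) : Prop :=
  match l.dir with
  | .out =>
      (c.st l.snd, l, c'.st l.snd) ∈ S.delta l.snd ∧
      (∀ p, p ≠ l.snd → c'.st p = c.st p) ∧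
      c'.ch l.snd l.rcv = c.ch l.snd l.rcv ++ [l.msg] ∧
      (∀ p q, (p, q) ≠ (l.snd, l.rcv) → c'.ch p q = c.ch p q)
  | .inp =>
      (c.st l.rcv, l, c'.st l.rcv) ∈ S.delta l.rcv ∧
      (∀ p, p ≠ l.rcv → c'.st p = c.st p) ∧
      c.ch l.snd l.rcv = l.msg :: c'.ch l.snd l.rcv ∧
      (∀ p q, (p, q) ≠ (l.snd, l.rcv) → c'.ch p q = c.ch p q)

/-- Unlabelled transition relation. -/
def Step {P A : Type} (S : CS P A) (c c' : Config S) : Prop :=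
  ∃ l, StepL S c l c'

/-- Reachability between configurations. -/
def Reach {P A : Type} (S : CS P A) : Config S → Config S → Prop :=
  Relation.ReflTransGen (Step S)

/-- The set of configurations reachable from the initial configuration. -/
def RC {P A : Type} (S : CS P A) : Set (Config S) :=
  {c | Reach S S.initConfig c}

/-- A local state is final if it has no outgoing transition. -/
def FinalSt {Q P A : Type} (δ : Set (Q × Act P A × Q)) (q : Q) : Prop :=
  ∀ l q', (q, l, q') ∉ δ

/-- A local state is receiving if it is not final and all its outgoing
transitions are labelled with input actions. -/
def ReceivingSt {Q P A : Type} (δ : Set (Q × Act P A × Q)) (q : Q) : Prop :=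
  (∃ l q', (q, l, q') ∈ δ) ∧ ∀ l q', (q, l, q') ∈ δ → (l : Act P A).dir = Dir.inp

/-- A local state is mixed if it has at least one outgoing output-labelled
transition and at least one outgoing input-labelled transition. -/
def MixedSt {Q P A : Type} (δ : Set (Q × Act P A × Q)) (q : Q) : Prop :=
  (∃ l q', (q, l, q') ∈ δ ∧ (l : Act P A).dir = Dir.out) ∧
  (∃ l q', (q, l, q') ∈ δ ∧ (l : Act P A).dir = Dir.inp)

/-- A machine has no mixed states. -/
def NoMixed {Q P A : Type} (δ : Set (Q × Act P A × Q)) : Prop :=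
  ∀ q, ¬ MixedSt δ q

/-- Deadlock configuration: all channels empty but all machines in receiving states. -/
def DeadlockConfig {P A : Type} (S : CS P A) (c : Config S) : Prop :=
  (∀ p q, c.ch p q = []) ∧ ∀ p, ReceivingSt (S.delta p) (c.st p)

def DeadlockFree {P A : Type} (S : CS P A) : Prop :=
  ∀ c ∈ RC S, ¬ DeadlockConfig S c

/-- Orphan-message configuration: all machines final but some channel nonempty. -/
def OrphanConfig {P A : Type} (S : CS P A) (c : Config S) : Prop :=
  (∀ p, FinalSt (S.delta p) (c.st p)) ∧ ∃ p q, c.ch p q ≠ []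

def OrphanFree {P A : Type} (S : CS P A) : Prop :=
  ∀ c ∈ RC S, ¬ OrphanConfig S c

/-- Unspecified reception configuration: some machine `r` is in a receiving state and,
for every input transition of `r`, the corresponding channel is nonempty with a
first element different from the expected message. -/
def URConfig {P A : Type} (S : CS P A) (c : Config S) : Prop :=
  ∃ r, ReceivingSt (S.delta r) (c.st r) ∧
    ∀ s a q', (c.st r, Act.mk s r Dir.inp a, q') ∈ S.delta r →
      (c.ch s r ≠ [] ∧ ¬ ∃ w, c.ch s r = a :: w)

def ReceptionErrorFree {P A : Type} (S : CS P A) : Prop :=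
  ∀ c ∈ RC S, ¬ URConfig S c

/-- Progress: every reachable configuration has an outgoing transition or all
machines are in final states. -/
def ProgressProp {P A : Type} (S : CS P A) : Prop :=
  ∀ c ∈ RC S, (∃ c', Step S c c') ∨ ∀ p, FinalSt (S.delta p) (c.st p)

/-- `p`-lock configuration: `p` is in a receiving state and never occurs as the
subject of an action in any transition sequence from `c`. -/
def PLockConfig {P A : Type} (S : CS P A) (c : Config S) (p : P) : Prop :=
  ReceivingSt (S.delta p) (c.st p) ∧
  ∀ c1 l c2, Reach S c c1 → StepL S c1 l c2 → l.subject ≠ p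

def LockFree {P A : Type} (S : CS P A) : Prop :=
  ∀ c ∈ RC S, ∀ p, ¬ PLockConfig S c p

section Composition

variable {I : Type} {P : I → Type} {A : Type}

/-- Messages occurring in input actions of the machine of `p`. -/
def inMsgs {Pp A : Type} (S : CS Pp A) (p : Pp) : Set A :=
  {a | ∃ q s q', (q, Act.mk s p Dir.inp a, q') ∈ S.delta p}

/-- Messages occurring in output actions of the machine of `p`. -/
def outMsgs {Pp A : Type} (S : CS Pp A) (p : Pp) : Set A :=
  {a | ∃ q r q', (q, Act.mk p r Dir.out a, q') ∈ S.delta p}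

/-- `CM` is a connection model for the interfaces `hh i` of the family `S`
(the interface `h_i` is represented by its index `i`). -/
def IsConnModel (S : ∀ i, CS (P i) A) (hh : ∀ i, P i) (CM : Set (I × A × I)) : Prop :=
  ∀ i a,
    (a ∈ inMsgs (S i) (hh i) →
      ∃ j, j ≠ i ∧ a ∈ outMsgs (S j) (hh j) ∧ (i, a, j) ∈ CM) ∧
    (a ∈ outMsgs (S i) (hh i) →
      ∃ j, j ≠ i ∧ a ∈ inMsgs (S j) (hh j) ∧ (j, a, i) ∈ CM)

/-- `CM` is a strong connection model: additionally the connecting partner is unique. -/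
def IsStrongConnModel (S : ∀ i, CS (P i) A) (hh : ∀ i, P i) (CM : Set (I × A × I)) : Prop :=
  IsConnModel S hh CM ∧
  ∀ i a,
    (a ∈ inMsgs (S i) (hh i) → ∃! j, (i, a, j) ∈ CM) ∧
    (a ∈ outMsgs (S i) (hh i) → ∃! j, (j, a, i) ∈ CM)

/-- Conditions (*) and (**) for a candidate transition relation `d` of the local
connection policy of interface `hh i` (the name `k_i` is represented by `i`). -/
def PolicySat (S : ∀ i, CS (P i) A) (hh : ∀ i, P i) (CM : Set (I × A × I)) (i : I)
    (d : Set ((S i).St (hh i) × Act I A × (S i).St (hh i))) : Prop :=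
  (∀ q r a q', (q, Act.mk r (hh i) Dir.inp a, q') ∈ (S i).delta (hh i) →
      ∃ j, j ≠ i ∧ (i, a, j) ∈ CM ∧ (q, Act.mk i j Dir.out a, q') ∈ d) ∧
  (∀ q r a q', (q, Act.mk (hh i) r Dir.out a, q') ∈ (S i).delta (hh i) →
      ∃ j, j ≠ i ∧ (j, a, i) ∈ CM ∧ (q, Act.mk j i Dir.inp a, q') ∈ d)

/-- `d` belongs to the local connection policy set `IS(M_{h_i}, CM)`:
it is a minimal relation satisfying (*) and (**).  (The states `q̇` of the
policy machine are identified with the states `q` of `M_{h_i}`.) -/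
def InIS (S : ∀ i, CS (P i) A) (hh : ∀ i, P i) (CM : Set (I × A × I)) (i : I)
    (d : Set ((S i).St (hh i) × Act I A × (S i).St (hh i))) : Prop :=
  PolicySat S hh CM i d ∧ ∀ d', d' ⊆ d → PolicySat S hh CM i d' → d' = d

/-- The communicating system (over the participant type `I` of names `k_i`)
determined by the family of transition relations `Kd` of a connection policy. -/
def policyCS (S : ∀ i, CS (P i) A) (hh : ∀ i, P i)
    (Kd : ∀ i, Set ((S i).St (hh i) × Act I A × (S i).St (hh i))) : CS I A where
  St := fun i => (S i).St (hh i)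
  init := fun i => (S i).init (hh i)
  delta := Kd

/-- `Kd` is a connection policy for the interfaces `hh` complying with `CM`. -/
def IsConnPolicy (S : ∀ i, CS (P i) A) (hh : ∀ i, P i) (CM : Set (I × A × I))
    (Kd : ∀ i, Set ((S i).St (hh i) × Act I A × (S i).St (hh i))) : Prop :=
  ∀ i, InIS S hh CM i (Kd i)

/-- States of the gateway for interface `hh i`: the original states plus one
fresh state per transition of `M_{h_i}`. -/
abbrev GWState (S : ∀ i, CS (P i) A) (hh : ∀ i, P i) (i : I) : Type :=
  (S i).St (hh i) ⊕ ((S i).St (hh i) × Act (P i) A × (S i).St (hh i))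

/-- Lifting of a local action of system `i` to the composed participant type. -/
def liftAct (i : I) (l : Act (P i) A) : Act ((j : I) × P j) A :=
  Act.mk ⟨i, l.snd⟩ ⟨i, l.rcv⟩ l.dir l.msg

/-- Transition relation of the gateway `M_{h_i} ⟲ M_{k_i}`. -/
def GWdelta (S : ∀ i, CS (P i) A) (hh : ∀ i, P i)
    (Kd : ∀ i, Set ((S i).St (hh i) × Act I A × (S i).St (hh i))) (i : I) :
    Set (GWState S hh i × Act ((j : I) × P j) A × GWState S hh i) :=
  {x | ∃ q a q',
    (∃ s r, (q, Act.mk (hh i) s Dir.out a, q') ∈ (S i).delta (hh i) ∧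
        (q, Act.mk r i Dir.inp a, q') ∈ Kd i ∧
        (x = (Sum.inl q, Act.mk ⟨r, hh r⟩ ⟨i, hh i⟩ Dir.inp a,
              Sum.inr (q, Act.mk (hh i) s Dir.out a, q')) ∨
         x = (Sum.inr (q, Act.mk (hh i) s Dir.out a, q'),
              Act.mk ⟨i, hh i⟩ ⟨i, s⟩ Dir.out a, Sum.inl q'))) ∨
    (∃ s r, (q, Act.mk s (hh i) Dir.inp a, q') ∈ (S i).delta (hh i) ∧
        (q, Act.mk i r Dir.out a, q') ∈ Kd i ∧
        (x = (Sum.inl q, Act.mk ⟨i, s⟩ ⟨i, hh i⟩ Dir.inp a,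
              Sum.inr (q, Act.mk s (hh i) Dir.inp a, q')) ∨
         x = (Sum.inr (q, Act.mk s (hh i) Dir.inp a, q'),
              Act.mk ⟨i, hh i⟩ ⟨r, hh r⟩ Dir.out a, Sum.inl q')))}

open Classical in
/-- State type of the machine of participant `⟨i, p⟩` in the multicomposition:
the gateway state type if `p` is the interface of system `i`, the original
state type otherwise. -/
noncomputable def MCSt (S : ∀ i, CS (P i) A) (hh : ∀ i, P i) (x : (i : I) × P i) : Type :=
  if x.2 = hh x.1 then GWState S hh x.1 else (S x.1).St x.2

/-- The multicomposition `MC({S_i}, K)`: all machines of the single systems,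
with the machine of each interface `hh i` replaced by its gateway. -/
noncomputable def MC (S : ∀ i, CS (P i) A) (hh : ∀ i, P i)
    (Kd : ∀ i, Set ((S i).St (hh i) × Act I A × (S i).St (hh i))) :
    CS ((i : I) × P i) A where
  St := MCSt S hh
  init := fun x => by
    by_cases hp : x.2 = hh x.1
    · have h : MCSt S hh x = GWState S hh x.1 := by simp [MCSt, hp]
      rw [h]; exact Sum.inl ((S x.1).init (hh x.1))
    · have h : MCSt S hh x = (S x.1).St x.2 := by simp [MCSt, hp]
      rw [h]; exact (S x.1).init x.2
  delta := fun x => by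
    by_cases hp : x.2 = hh x.1
    · have h : MCSt S hh x = GWState S hh x.1 := by simp [MCSt, hp]
      rw [h]; exact GWdelta S hh Kd x.1
    · have h : MCSt S hh x = (S x.1).St x.2 := by simp [MCSt, hp]
      rw [h]
      exact {t | ∃ q l q', (q, l, q') ∈ (S x.1).delta x.2 ∧ t = (q, liftAct x.1 l, q')}

/-- The state of the gateway of interface `hh i` in a configuration of the
multicomposition, as an element of `GWState`. -/
noncomputable def toGW (S : ∀ i, CS (P i) A) (hh : ∀ i, P i) (i : I)
    (x : MCSt S hh ⟨i, hh i⟩) : GWState S hh i :=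
  cast (by simp [MCSt]) x

/-- The state of a non-interface participant in a configuration of the
multicomposition, as an element of its original state type. -/
noncomputable def toLoc (S : ∀ i, CS (P i) A) (hh : ∀ i, P i) {i : I} {p : P i}
    (hp : p ≠ hh i) (x : MCSt S hh ⟨i, p⟩) : (S i).St p :=
  cast (by simp [MCSt, hp]) x

/-- Projection of a configuration of the multicomposition to system `S i`,
assuming the gateway state of `hh i` is not a fresh intermediate state
(i.e. it is of the form `Sum.inl q`). -/
noncomputable def projSys (S : ∀ i, CS (P i) A) (hh : ∀ i, P i)
    (Kd : ∀ i, Set ((S i).St (hh i) × Act I A × (S i).St (hh i)))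
    (i : I) (s : Config (MC S hh Kd))
    (hq : ∃ q, toGW S hh i (s.st ⟨i, hh i⟩) = Sum.inl q) : Config (S i) where
  st := fun p => by
    by_cases hp : p = hh i
    · rw [hp]; exact hq.choose
    · exact toLoc S hh hp (s.st ⟨i, p⟩)
  ch := fun p q => s.ch ⟨i, p⟩ ⟨i, q⟩

/-- Projection of a configuration of the multicomposition to the connection
policy `K`, assuming no gateway is in a fresh intermediate state. -/
noncomputable def projPolicy (S : ∀ i, CS (P i) A) (hh : ∀ i, P i)
    (Kd : ∀ i, Set ((S i).St (hh i) × Act I A × (S i).St (hh i)))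
    (s : Config (MC S hh Kd))
    (hq : ∀ i, ∃ q, toGW S hh i (s.st ⟨i, hh i⟩) = Sum.inl q) :
    Config (policyCS S hh Kd) where
  st := fun i => (hq i).choose
  ch := fun i j => s.ch ⟨i, hh i⟩ ⟨j, hh j⟩

end Composition

end CFSM

/-
A configuration of the multicomposition is read as a configuration of each system `S i` and of
the policy `K`. A gateway in an original state `q` stands for `h_i` and `k_i` both in `q`. In the
fresh state of a transition `t` from `q` to `q'`, the interface `h_i` has already performed `t`,
so it stands in `q'`, and a message the gateway still has to deliver inside `S i` is counted as
already in the corresponding buffer of `S i`; `k_i` has performed the dual of `t` only if the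
message came from another gateway. Every step of the multicomposition is then a step or a stutter
of each of these projections, so the projections of a reachable configuration are reachable.

In a deadlock every gateway waits in an original state, since fresh states only output. If some
interface can receive there, it cannot send (no mixed states) and its system `S i` is deadlocked.
Otherwise every `h_i` waits to send, so every `k_i` waits to receive, because by minimality every
transition of `k_i` is the dual of a transition of `h_i`; then `K` is deadlocked.
-/

namespace CFSM

open Relation

variable {I : Type} {P : I → Type} {A : Type}

theorem Config.ext {Q : Type} {S : CS Q A} {c c' : Config S} (hst : c.st = c'.st)
    (hch : c.ch = c'.ch) : c = c' := by
  cases c; cases c'; congr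

theorem StepL.st_eq_of_ne {Q : Type} {S : CS Q A} {c c' : Config S} {l : Act Q A}
    (h : StepL S c l c') {p : Q} (hp : p ≠ l.subject) : c'.st p = c.st p := by
  obtain ⟨_, _, d, _⟩ := l
  cases d
  exacts [h.2.1 p hp, h.2.1 p hp]

theorem StepL.ch_eq_of_ne {Q : Type} {S : CS Q A} {c c' : Config S} {l : Act Q A}
    (h : StepL S c l c') {p q : Q} (hpq : (p, q) ≠ (l.snd, l.rcv)) : c'.ch p q = c.ch p q := by
  obtain ⟨_, _, d, _⟩ := l
  cases d
  exacts [h.2.2.2 p q hpq, h.2.2.2 p q hpq]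

theorem ReceivingSt.of_noMixed {Q Q' : Type} {δ : Set (Q × Act Q' A × Q)} (hδ : NoMixed δ)
    {q q' : Q} {l : Act Q' A} (h : (q, l, q') ∈ δ) (hl : l.dir = .inp) : ReceivingSt δ q := by
  refine ⟨⟨l, q', h⟩, fun l' q'' h' => ?_⟩
  cases hd : l'.dir
  · exact absurd ⟨⟨l', q'', h', hd⟩, ⟨l, q', h, hl⟩⟩ (hδ q)
  · rfl

theorem mem_iff_of_heq {α β B : Type} (h : α = β) {s : Set (α × B × α)}
    {t : Set (β × B × β)} (hst : s ≍ t) (x x' : α) (l : B) :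
    (x, l, x') ∈ s ↔ (cast h x, l, cast h x') ∈ t := by
  subst h; cases hst; rfl

section Multicomposition

variable {S : ∀ i, CS (P i) A} {hh : ∀ i, P i}
  {Kd : ∀ i, Set ((S i).St (hh i) × Act I A × (S i).St (hh i))} {CM : Set (I × A × I)}

theorem InIS.forall_mem {i : I}
    {d : Set ((S i).St (hh i) × Act I A × (S i).St (hh i))} (hd : InIS S hh CM i d)
    {R : (S i).St (hh i) × Act I A × (S i).St (hh i) → Prop}
    (hR : PolicySat S hh CM i {u | u ∈ d ∧ R u}) : ∀ u ∈ d, R u := by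
  intro u hu
  rw [← hd.2 _ (fun _ hv => hv.1) hR] at hu
  exact hu.2

theorem InIS.snd_ne_rcv {i : I}
    {d : Set ((S i).St (hh i) × Act I A × (S i).St (hh i))} (hd : InIS S hh CM i d)
    {q q' : (S i).St (hh i)} {l : Act I A} (ht : (q, l, q') ∈ d) : l.snd ≠ l.rcv := by
  refine hd.forall_mem (R := fun u => u.2.1.snd ≠ u.2.1.rcv)
    ⟨fun q p a q' hδ => ?_, fun q p a q' hδ => ?_⟩ _ ht
  · obtain ⟨j, hj, hcm, hmem⟩ := hd.1.1 q p a q' hδ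
    exact ⟨j, hj, hcm, hmem, hj.symm⟩
  · obtain ⟨j, hj, hcm, hmem⟩ := hd.1.2 q p a q' hδ
    exact ⟨j, hj, hcm, hmem, hj⟩

theorem InIS.exists_inp_of_out {i : I}
    {d : Set ((S i).St (hh i) × Act I A × (S i).St (hh i))} (hd : InIS S hh CM i d)
    {q q' : (S i).St (hh i)} {l : Act I A} (ht : (q, l, q') ∈ d) (hl : l.dir = .out) :
    ∃ p, (q, ⟨p, hh i, .inp, l.msg⟩, q') ∈ (S i).delta (hh i) := by
  refine hd.forall_mem (R := fun u => u.2.1.dir = .out →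
      ∃ p, (u.1, ⟨p, hh i, .inp, u.2.1.msg⟩, u.2.2) ∈ (S i).delta (hh i))
    ⟨fun q p a q' hδ => ?_, fun q p a q' hδ => ?_⟩ _ ht hl
  · obtain ⟨j, hj, hcm, hmem⟩ := hd.1.1 q p a q' hδ
    exact ⟨j, hj, hcm, hmem, fun _ => ⟨p, hδ⟩⟩
  · obtain ⟨j, hj, hcm, hmem⟩ := hd.1.2 q p a q' hδ
    exact ⟨j, hj, hcm, hmem, nofun⟩

theorem toLoc_init {i : I} {p : P i} (hp : p ≠ hh i) :
    toLoc S hh hp ((MC S hh Kd).init ⟨i, p⟩) = (S i).init p := by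
  refine cast_eq_iff_heq.mpr ?_
  simp only [MC, dif_neg hp]
  exact cast_heq _ _

theorem toLoc_surjective {i : I} {p : P i} (hp : p ≠ hh i) :
    Function.Surjective (toLoc S hh hp) :=
  fun y => ⟨cast (by simp [MCSt, hp]) y, by simp [toLoc]⟩

theorem mem_MC_delta_hh {i : I} (x x' : (MC S hh Kd).St ⟨i, hh i⟩)
    (l : Act ((j : I) × P j) A) :
    (x, l, x') ∈ (MC S hh Kd).delta ⟨i, hh i⟩ ↔
      (toGW S hh i x, l, toGW S hh i x') ∈ GWdelta S hh Kd i := by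
  refine mem_iff_of_heq _ ?_ x x' l
  simp only [MC, dif_pos]
  exact cast_heq _ _

theorem mem_MC_delta_of_ne {i : I} {p : P i} (hp : p ≠ hh i) (x x' : (MC S hh Kd).St ⟨i, p⟩)
    (l : Act ((j : I) × P j) A) :
    (x, l, x') ∈ (MC S hh Kd).delta ⟨i, p⟩ ↔
      ∃ l₀, (toLoc S hh hp x, l₀, toLoc S hh hp x') ∈ (S i).delta p ∧
        l = liftAct i l₀ := by
  refine (mem_iff_of_heq (show MCSt S hh ⟨i, p⟩ = (S i).St p by simp [MCSt, hp])
    (t := {t | ∃ q l₀ q', (q, l₀, q') ∈ (S i).delta p ∧ t = (q, liftAct i l₀, q')})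
    (by simp only [MC, dif_neg hp]; exact cast_heq _ _) x x' l).trans ?_
  constructor
  · rintro ⟨q, l₀, q', hmem, heq⟩
    simp only [Prod.mk.injEq] at heq
    obtain ⟨rfl, rfl, rfl⟩ := heq
    exact ⟨l₀, hmem, rfl⟩
  · rintro ⟨l₀, hmem, rfl⟩
    exact ⟨_, l₀, _, hmem, rfl⟩

theorem ReceivingSt.toLoc {i : I} {p : P i} (hp : p ≠ hh i) {x : (MC S hh Kd).St ⟨i, p⟩}
    (h : ReceivingSt ((MC S hh Kd).delta ⟨i, p⟩) x) :
    ReceivingSt ((S i).delta p) (toLoc S hh hp x) := by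
  obtain ⟨⟨l, x', hmem⟩, hinp⟩ := h
  obtain ⟨l₀, hmem₀, rfl⟩ := (mem_MC_delta_of_ne hp _ _ _).1 hmem
  refine ⟨⟨l₀, _, hmem₀⟩, fun l₁ y hy => ?_⟩
  obtain ⟨y, rfl⟩ := toLoc_surjective hp y
  exact hinp _ _ ((mem_MC_delta_of_ne hp _ _ _).2 ⟨l₁, hy, rfl⟩)

namespace GWState

variable {i : I}

def sysState : GWState S hh i → (S i).St (hh i)
  | .inl q => q
  | .inr (_, _, q') => q'

def policyState : GWState S hh i → (S i).St (hh i)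
  | .inl q => q
  | .inr (q, l, q') => if l.dir = .out then q' else q

open Classical in
noncomputable def pending : GWState S hh i → P i → P i → List A
  | .inl _ => fun _ _ => []
  | .inr (_, l, _) => fun p r => if l.dir = .out ∧ p = hh i ∧ r = l.rcv then [l.msg] else []

theorem pending_of_ne (g : GWState S hh i) {p : P i} (hp : p ≠ hh i) (r : P i) :
    g.pending p r = [] := by
  rcases g with q | ⟨q, l, q'⟩ <;> simp [pending, hp]

end GWState

noncomputable def Config.gw (s : Config (MC S hh Kd)) (i : I) : GWState S hh i :=
  toGW S hh i (s.st ⟨i, hh i⟩)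

open Classical in
noncomputable def Config.toSys (s : Config (MC S hh Kd)) (i : I) : Config (S i) where
  st p := if hp : p = hh i then hp ▸ (s.gw i).sysState else toLoc S hh hp (s.st ⟨i, p⟩)
  ch p r := s.ch ⟨i, p⟩ ⟨i, r⟩ ++ (s.gw i).pending p r

-- A gateway's channel to itself is internal to its own system; `K` never uses self-channels.
open Classical in
noncomputable def Config.toPolicy (s : Config (MC S hh Kd)) : Config (policyCS S hh Kd) where
  st i := (s.gw i).policyState
  ch i j := if i = j then [] else s.ch ⟨i, hh i⟩ ⟨j, hh j⟩

namespace Config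

variable {s s' : Config (MC S hh Kd)} {i : I} {l : Act ((j : I) × P j) A}

theorem toSys_st_hh : (s.toSys i).st (hh i) = (s.gw i).sysState := by
  simp [toSys]

theorem toSys_st_of_ne {p : P i} (hp : p ≠ hh i) :
    (s.toSys i).st p = toLoc S hh hp (s.st ⟨i, p⟩) := by
  simp [toSys, hp]

theorem toSys_ch (p r : P i) :
    (s.toSys i).ch p r = s.ch ⟨i, p⟩ ⟨i, r⟩ ++ (s.gw i).pending p r :=
  rfl

theorem toPolicy_st (j : I) : s.toPolicy.st j = (s.gw j).policyState :=
  rfl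

theorem toPolicy_ch_of_ne {j k : I} (hjk : j ≠ k) :
    s.toPolicy.ch j k = s.ch ⟨j, hh j⟩ ⟨k, hh k⟩ :=
  if_neg hjk

theorem toSys_st_congr {p : P i} (h : s'.st ⟨i, p⟩ = s.st ⟨i, p⟩) :
    (s'.toSys i).st p = (s.toSys i).st p := by
  by_cases hp : p = hh i
  · subst hp
    simp only [toSys_st_hh, gw, h]
  · simp only [toSys_st_of_ne hp, h]

theorem gw_initConfig : (MC S hh Kd).initConfig.gw i = .inl ((S i).init (hh i)) := by
  change toGW S hh i ((MC S hh Kd).init ⟨i, hh i⟩) = _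
  refine cast_eq_iff_heq.mpr ?_
  simp only [MC, dif_pos]
  exact cast_heq _ _

theorem toSys_initConfig : (MC S hh Kd).initConfig.toSys i = (S i).initConfig := by
  refine Config.ext (funext fun p => ?_) (funext₂ fun p r => ?_)
  · by_cases hp : p = hh i
    · subst hp
      rw [toSys_st_hh, gw_initConfig]
      rfl
    · rw [toSys_st_of_ne hp]
      exact toLoc_init (Kd := Kd) hp
  · simp only [toSys, gw_initConfig, GWState.pending]
    rfl

theorem toPolicy_initConfig : (MC S hh Kd).initConfig.toPolicy = (policyCS S hh Kd).initConfig := by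
  refine Config.ext (funext fun j => ?_) (funext₂ fun j k => ?_)
  · simp only [toPolicy, gw_initConfig, GWState.policyState]
    rfl
  · simp [toPolicy, CS.initConfig]

theorem gw_eq_of_stepL (h : StepL (MC S hh Kd) s l s')
    (hi : ⟨i, hh i⟩ ≠ l.subject) : s'.gw i = s.gw i := by
  rw [gw, gw, h.st_eq_of_ne hi]

theorem toSys_st_eq_of_stepL (h : StepL (MC S hh Kd) s l s')
    {x p : P i} (hl : l.subject = ⟨i, x⟩) (hp : p ≠ x) :
    (s'.toSys i).st p = (s.toSys i).st p :=
  toSys_st_congr (h.st_eq_of_ne (hl ▸ sigma_mk_injective.ne hp))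

theorem toPolicy_st_eq_of_stepL (h : StepL (MC S hh Kd) s l s')
    (hl : l.subject.1 = i) {j : I} (hj : j ≠ i) : s'.toPolicy.st j = s.toPolicy.st j := by
  rw [toPolicy_st, toPolicy_st, gw_eq_of_stepL h fun e => hj (hl ▸ congrArg Sigma.fst e)]

theorem toPolicy_ch_eq_of_stepL (h : StepL (MC S hh Kd) s l s')
    {j k : I} (hjk : (j, k) ≠ (l.snd.1, l.rcv.1)) :
    s'.toPolicy.ch j k = s.toPolicy.ch j k := by
  by_cases hjk' : j = k
  · simp [toPolicy, hjk']
  · rw [toPolicy_ch_of_ne hjk', toPolicy_ch_of_ne hjk',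
      h.ch_eq_of_ne fun he => hjk (Prod.ext (congrArg (·.1.1) he) (congrArg (·.2.1) he))]

theorem toSys_eq_of_subject_ne (h : StepL (MC S hh Kd) s l s')
    (hi : l.subject.1 ≠ i) : s'.toSys i = s.toSys i := by
  have hst : ∀ p : P i, s'.st ⟨i, p⟩ = s.st ⟨i, p⟩ := fun p =>
    h.st_eq_of_ne fun hp => hi (congrArg Sigma.fst hp).symm
  have hch : ∀ p r : P i, s'.ch ⟨i, p⟩ ⟨i, r⟩ = s.ch ⟨i, p⟩ ⟨i, r⟩ := by
    intro p r
    refine h.ch_eq_of_ne fun hpr => hi ?_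
    obtain ⟨_, _, d, _⟩ := l
    cases d <;> simp only [Act.subject, Prod.mk.injEq] at hpr ⊢
    exacts [(congrArg Sigma.fst hpr.1).symm, (congrArg Sigma.fst hpr.2).symm]
  refine Config.ext (funext fun p => toSys_st_congr (hst p)) (funext₂ fun p r => ?_)
  simp only [toSys, gw, hst, hch]

theorem toPolicy_eq_of_stepL (h : StepL (MC S hh Kd) s l s')
    (hl : l.snd.1 = l.rcv.1) (hst : ∀ j, (s'.gw j).policyState = (s.gw j).policyState) :
    s'.toPolicy = s.toPolicy := by
  refine Config.ext (funext hst) (funext₂ fun j k => ?_)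
  by_cases hjk : j = k
  · simp [toPolicy, hjk]
  · rw [toPolicy_ch_of_ne hjk, toPolicy_ch_of_ne hjk, h.ch_eq_of_ne fun he =>
      hjk ((congrArg (·.1.1) he).trans (hl.trans (congrArg (·.2.1) he).symm))]

theorem stepL_toSys_of_local (h : StepL (MC S hh Kd) s l s')
    {x : P i} (hl : l.subject = ⟨i, x⟩) (hx : x ≠ hh i) :
    ∃ l₀, l = liftAct i l₀ ∧ StepL (S i) (s.toSys i) l₀ (s'.toSys i) := by
  have hgw : s'.gw i = s.gw i := gw_eq_of_stepL h (hl ▸ sigma_mk_injective.ne hx.symm)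
  have hst : ∀ p ≠ x, (s'.toSys i).st p = (s.toSys i).st p := fun p hp =>
    toSys_st_eq_of_stepL h hl hp
  obtain ⟨snd, rcv, d, a⟩ := l
  cases d
  · simp only [Act.subject] at hl
    subst hl
    obtain ⟨hmem, -, hbuf, hch⟩ := h
    obtain ⟨⟨x₀, r, d₀, a₀⟩, hmem₀, hlift⟩ := (mem_MC_delta_of_ne hx _ _ _).1 hmem
    simp only [liftAct, Act.mk.injEq, Sigma.mk.inj_iff, heq_eq_eq, true_and] at hlift
    obtain ⟨rfl, rfl, rfl, rfl⟩ := hlift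
    refine ⟨⟨x, r, .out, a⟩, rfl, ?_, hst, ?_, fun p q hpq => ?_⟩
    · rwa [toSys_st_of_ne hx, toSys_st_of_ne hx]
    · simp only [toSys_ch, hbuf, hgw, GWState.pending_of_ne _ hx, List.append_nil]
    · rw [toSys_ch, toSys_ch, hgw, hch _ _ (by simpa using hpq)]
  · simp only [Act.subject] at hl
    subst hl
    obtain ⟨hmem, -, hbuf, hch⟩ := h
    obtain ⟨⟨t, x₀, d₀, a₀⟩, hmem₀, hlift⟩ := (mem_MC_delta_of_ne hx _ _ _).1 hmem
    simp only [liftAct, Act.mk.injEq, Sigma.mk.inj_iff, heq_eq_eq, true_and] at hlift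
    obtain ⟨rfl, rfl, rfl, rfl⟩ := hlift
    refine ⟨⟨t, x, .inp, a⟩, rfl, ?_, hst, ?_, fun p q hpq => ?_⟩
    · rwa [toSys_st_of_ne hx, toSys_st_of_ne hx]
    · simp only [toSys_ch, hbuf, hgw, List.cons_append]
    · rw [toSys_ch, toSys_ch, hgw, hch _ _ (by simpa using hpq)]

theorem toPolicy_eq_of_local (h : StepL (MC S hh Kd) s l s')
    {x : P i} (hl : l.subject = ⟨i, x⟩) (hx : x ≠ hh i) : s'.toPolicy = s.toPolicy := by
  obtain ⟨l₀, rfl, -⟩ := stepL_toSys_of_local h hl hx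
  refine toPolicy_eq_of_stepL h rfl fun j => ?_
  rw [gw_eq_of_stepL h (hl ▸ fun he => hx (by cases he; rfl))]

theorem mem_GWdelta_of_stepL (h : StepL (MC S hh Kd) s l s')
    (hl : l.subject = ⟨i, hh i⟩) : (s.gw i, l, s'.gw i) ∈ GWdelta S hh Kd i := by
  obtain ⟨_, _, d, _⟩ := l
  cases d <;> simp only [Act.subject] at hl <;> subst hl <;> exact (mem_MC_delta_hh _ _ _).1 h.1

section GatewaySteps

variable {q q' : (S i).St (hh i)} {a : A} {r : I} {t : P i}

theorem stepL_toSys_of_recvFromPeer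
    (h : StepL (MC S hh Kd) s ⟨⟨r, hh r⟩, ⟨i, hh i⟩, .inp, a⟩ s') (hr : r ≠ i)
    (hg : s.gw i = .inl q) (hg' : s'.gw i = .inr (q, ⟨hh i, t, .out, a⟩, q'))
    (hδ : (q, ⟨hh i, t, .out, a⟩, q') ∈ (S i).delta (hh i)) :
    StepL (S i) (s.toSys i) ⟨hh i, t, .out, a⟩ (s'.toSys i) := by
  have hch : ∀ p u : P i, s'.ch ⟨i, p⟩ ⟨i, u⟩ = s.ch ⟨i, p⟩ ⟨i, u⟩ := fun p u =>
    h.ch_eq_of_ne (by simp [hr.symm])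
  refine ⟨?_, fun p hp => toSys_st_eq_of_stepL h rfl hp, ?_, fun p u hpu => ?_⟩
  · rwa [toSys_st_hh, toSys_st_hh, hg, hg']
  · simp [toSys_ch, hg, hg', hch, GWState.pending]
  · simp only [Ne, Prod.mk.injEq] at hpu
    simp [toSys_ch, hg, hg', hch, GWState.pending, hpu]

theorem stepL_toPolicy_of_recvFromPeer
    (h : StepL (MC S hh Kd) s ⟨⟨r, hh r⟩, ⟨i, hh i⟩, .inp, a⟩ s') (hr : r ≠ i)
    (hg : s.gw i = .inl q) (hg' : s'.gw i = .inr (q, ⟨hh i, t, .out, a⟩, q'))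
    (hk : (q, ⟨r, i, .inp, a⟩, q') ∈ Kd i) :
    StepL (policyCS S hh Kd) s.toPolicy ⟨r, i, .inp, a⟩ s'.toPolicy := by
  refine ⟨?_, fun j hj => toPolicy_st_eq_of_stepL h rfl hj, ?_, fun j k hjk => ?_⟩
  · rwa [toPolicy_st, toPolicy_st, hg, hg']
  · rw [toPolicy_ch_of_ne hr, toPolicy_ch_of_ne hr]
    exact h.2.2.1
  · exact toPolicy_ch_eq_of_stepL h hjk

theorem toSys_eq_of_sendToMember
    (h : StepL (MC S hh Kd) s ⟨⟨i, hh i⟩, ⟨i, t⟩, .out, a⟩ s')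
    (hg : s.gw i = .inr (q, ⟨hh i, t, .out, a⟩, q')) (hg' : s'.gw i = .inl q') :
    s'.toSys i = s.toSys i := by
  refine Config.ext (funext fun p => ?_) (funext₂ fun p u => ?_)
  · by_cases hp : p = hh i
    · subst hp
      rw [toSys_st_hh, toSys_st_hh, hg, hg']
      rfl
    · exact toSys_st_eq_of_stepL h rfl hp
  · by_cases hpu : p = hh i ∧ u = t
    · obtain ⟨rfl, rfl⟩ := hpu
      simp [toSys_ch, hg, hg', h.2.2.1, GWState.pending]
    · rw [toSys_ch, toSys_ch, h.ch_eq_of_ne (by simpa using hpu)]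
      simp [hg, hg', GWState.pending, hpu]

theorem toPolicy_eq_of_sendToMember
    (h : StepL (MC S hh Kd) s ⟨⟨i, hh i⟩, ⟨i, t⟩, .out, a⟩ s')
    (hg : s.gw i = .inr (q, ⟨hh i, t, .out, a⟩, q')) (hg' : s'.gw i = .inl q') :
    s'.toPolicy = s.toPolicy := by
  refine toPolicy_eq_of_stepL h rfl fun j => ?_
  by_cases hj : j = i
  · subst hj
    simp [hg, hg', GWState.policyState]
  · exact toPolicy_st_eq_of_stepL h rfl hj

theorem stepL_toSys_of_recvFromMember
    (h : StepL (MC S hh Kd) s ⟨⟨i, t⟩, ⟨i, hh i⟩, .inp, a⟩ s')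
    (hg : s.gw i = .inl q) (hg' : s'.gw i = .inr (q, ⟨t, hh i, .inp, a⟩, q'))
    (hδ : (q, ⟨t, hh i, .inp, a⟩, q') ∈ (S i).delta (hh i)) :
    StepL (S i) (s.toSys i) ⟨t, hh i, .inp, a⟩ (s'.toSys i) := by
  refine ⟨?_, fun p hp => toSys_st_eq_of_stepL h rfl hp, ?_, fun p u hpu => ?_⟩
  · rwa [toSys_st_hh, toSys_st_hh, hg, hg']
  · simp [toSys_ch, hg, hg', h.2.2.1, GWState.pending]
  · rw [toSys_ch, toSys_ch, h.ch_eq_of_ne (by simpa using hpu)]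
    simp [hg, hg', GWState.pending]

theorem toPolicy_eq_of_recvFromMember
    (h : StepL (MC S hh Kd) s ⟨⟨i, t⟩, ⟨i, hh i⟩, .inp, a⟩ s')
    (hg : s.gw i = .inl q) (hg' : s'.gw i = .inr (q, ⟨t, hh i, .inp, a⟩, q')) :
    s'.toPolicy = s.toPolicy := by
  refine toPolicy_eq_of_stepL h rfl fun j => ?_
  by_cases hj : j = i
  · subst hj
    simp [hg, hg', GWState.policyState]
  · exact toPolicy_st_eq_of_stepL h rfl hj

theorem toSys_eq_of_sendToPeer
    (h : StepL (MC S hh Kd) s ⟨⟨i, hh i⟩, ⟨r, hh r⟩, .out, a⟩ s') (hr : r ≠ i)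
    (hg : s.gw i = .inr (q, ⟨t, hh i, .inp, a⟩, q')) (hg' : s'.gw i = .inl q') :
    s'.toSys i = s.toSys i := by
  refine Config.ext (funext fun p => ?_) (funext₂ fun p u => ?_)
  · by_cases hp : p = hh i
    · subst hp
      rw [toSys_st_hh, toSys_st_hh, hg, hg']
      rfl
    · exact toSys_st_eq_of_stepL h rfl hp
  · rw [toSys_ch, toSys_ch, h.ch_eq_of_ne (by simp [hr.symm])]
    simp [hg, hg', GWState.pending]

theorem stepL_toPolicy_of_sendToPeer
    (h : StepL (MC S hh Kd) s ⟨⟨i, hh i⟩, ⟨r, hh r⟩, .out, a⟩ s') (hr : r ≠ i)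
    (hg : s.gw i = .inr (q, ⟨t, hh i, .inp, a⟩, q')) (hg' : s'.gw i = .inl q')
    (hk : (q, ⟨i, r, .out, a⟩, q') ∈ Kd i) :
    StepL (policyCS S hh Kd) s.toPolicy ⟨i, r, .out, a⟩ s'.toPolicy := by
  refine ⟨?_, fun j hj => toPolicy_st_eq_of_stepL h rfl hj, ?_, fun j k hjk => ?_⟩
  · rwa [toPolicy_st, toPolicy_st, hg, hg']
  · rw [toPolicy_ch_of_ne hr.symm, toPolicy_ch_of_ne hr.symm]
    exact h.2.2.1
  · exact toPolicy_ch_eq_of_stepL h hjk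

end GatewaySteps

theorem reflTransGen_toSys_toPolicy_of_step (hK : IsConnPolicy S hh CM Kd)
    (h : Step (MC S hh Kd) s s') :
    (∀ i, ReflTransGen (Step (S i)) (s.toSys i) (s'.toSys i)) ∧
      ReflTransGen (Step (policyCS S hh Kd)) s.toPolicy s'.toPolicy := by
  obtain ⟨l, h⟩ := h
  obtain ⟨⟨i, x⟩, hl⟩ : ∃ y, l.subject = y := ⟨_, rfl⟩
  suffices hi : ReflTransGen (Step (S i)) (s.toSys i) (s'.toSys i) ∧
      ReflTransGen (Step (policyCS S hh Kd)) s.toPolicy s'.toPolicy by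
    refine ⟨fun j => ?_, hi.2⟩
    by_cases hj : j = i
    · exact hj ▸ hi.1
    · rw [toSys_eq_of_subject_ne h (by rw [hl]; exact Ne.symm hj)]
  by_cases hx : x = hh i
  · subst hx
    rcases mem_GWdelta_of_stepL h hl with
      ⟨q, a, q', ⟨t, r, hδ, hk, hx | hx⟩ | ⟨t, r, hδ, hk, hx | hx⟩⟩ <;>
      simp only [Prod.mk.injEq] at hx <;> obtain ⟨hg, rfl, hg'⟩ := hx
    · have hr : r ≠ i := (hK i).snd_ne_rcv hk
      exact ⟨.single ⟨_, stepL_toSys_of_recvFromPeer h hr hg hg' hδ⟩,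
        .single ⟨_, stepL_toPolicy_of_recvFromPeer h hr hg hg' hk⟩⟩
    · rw [toSys_eq_of_sendToMember h hg hg', toPolicy_eq_of_sendToMember h hg hg']
      exact ⟨.refl, .refl⟩
    · rw [toPolicy_eq_of_recvFromMember h hg hg']
      exact ⟨.single ⟨_, stepL_toSys_of_recvFromMember h hg hg' hδ⟩, .refl⟩
    · have hr : r ≠ i := ((hK i).snd_ne_rcv hk).symm
      rw [toSys_eq_of_sendToPeer h hr hg hg']
      exact ⟨.refl, .single ⟨_, stepL_toPolicy_of_sendToPeer h hr hg hg' hk⟩⟩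
  · obtain ⟨l₀, -, h₀⟩ := stepL_toSys_of_local h hl hx
    rw [toPolicy_eq_of_local h hl hx]
    exact ⟨.single ⟨l₀, h₀⟩, .refl⟩

theorem toSys_toPolicy_mem_RC (hK : IsConnPolicy S hh CM Kd)
    (hs : s ∈ RC (MC S hh Kd)) :
    (∀ i, s.toSys i ∈ RC (S i)) ∧ s.toPolicy ∈ RC (policyCS S hh Kd) := by
  induction hs with
  | refl =>
    refine ⟨fun i => ?_, ?_⟩
    · change Reach _ _ _
      rw [toSys_initConfig]
      exact .refl
    · change Reach _ _ _
      rw [toPolicy_initConfig]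
      exact .refl
  | tail _ hstep ih =>
    obtain ⟨hsys, hpol⟩ := reflTransGen_toSys_toPolicy_of_step hK hstep
    exact ⟨fun i => (ih.1 i).trans (hsys i), ih.2.trans hpol⟩

theorem exists_gw_eq_inl_of_receivingSt
    (h : ReceivingSt ((MC S hh Kd).delta ⟨i, hh i⟩) (s.st ⟨i, hh i⟩)) :
    ∃ q, s.gw i = .inl q ∧ ∃ l q', (q, l, q') ∈ Kd i := by
  obtain ⟨⟨l, x', hmem⟩, hinp⟩ := h
  have hdir := hinp l x' hmem
  rcases (mem_MC_delta_hh _ _ _).1 hmem with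
    ⟨q, a, q', ⟨t, r, -, hk, hx | hx⟩ | ⟨t, r, -, hk, hx | hx⟩⟩ <;>
    simp only [Prod.mk.injEq] at hx <;> rw [hx.2.1] at hdir
  · exact ⟨q, hx.1, _, _, hk⟩
  · cases hdir
  · exact ⟨q, hx.1, _, _, hk⟩
  · cases hdir

end Config

variable {s : Config (MC S hh Kd)} {i : I}

theorem DeadlockConfig.toSys (hs : DeadlockConfig (MC S hh Kd) s)
    (hnomix : NoMixed ((S i).delta (hh i))) {q q' : (S i).St (hh i)} {l₀ : Act (P i) A}
    (hg : s.gw i = .inl q) (hδ : (q, l₀, q') ∈ (S i).delta (hh i)) (hl₀ : l₀.dir = .inp) :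
    DeadlockConfig (S i) (s.toSys i) := by
  refine ⟨fun p u => by simp [Config.toSys_ch, hs.1, hg, GWState.pending], fun p => ?_⟩
  by_cases hp : p = hh i
  · subst hp
    rw [Config.toSys_st_hh, hg]
    exact ReceivingSt.of_noMixed hnomix hδ hl₀
  · rw [Config.toSys_st_of_ne hp]
    exact (hs.2 ⟨i, p⟩).toLoc hp

theorem DeadlockConfig.toPolicy
    (hs : DeadlockConfig (MC S hh Kd) s) (hK : IsConnPolicy S hh CM Kd)
    {Q : ∀ i, (S i).St (hh i)} (hQ : ∀ i, s.gw i = .inl (Q i))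
    (hKQ : ∀ i, ∃ l q', (Q i, l, q') ∈ Kd i)
    (hinp : ∀ i p a q', (Q i, ⟨p, hh i, .inp, a⟩, q') ∉ (S i).delta (hh i)) :
    DeadlockConfig (policyCS S hh Kd) s.toPolicy := by
  refine ⟨fun j k => by simp [Config.toPolicy, hs.1], fun j => ?_⟩
  rw [Config.toPolicy_st, hQ]
  refine ⟨hKQ j, fun l q' hk => ?_⟩
  cases hd : l.dir
  · obtain ⟨p, hδ⟩ := (hK j).exists_inp_of_out hk hd
    exact absurd hδ (hinp j _ _ _)
  · rfl

end Multicomposition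

end CFSM

open CFSM in
theorem deadlockFree_preserved_by_multicomposition_general
    {I : Type} {P : I → Type} {A : Type}
    (S : ∀ i, CS (P i) A)
    (hh : ∀ i, P i)
    (hnomix : ∀ i, NoMixed ((S i).delta (hh i)))
    (CM : Set (I × A × I))
    (Kd : ∀ i, Set ((S i).St (hh i) × Act I A × (S i).St (hh i)))
    (hK : IsConnPolicy S hh CM Kd)
    (hS : ∀ i, DeadlockFree (S i))
    (hKfree : DeadlockFree (policyCS S hh Kd)) :
    DeadlockFree (MC S hh Kd) := by
  intro s hs hdead
  obtain ⟨hsys, hpol⟩ := Config.toSys_toPolicy_mem_RC hK hs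
  choose Q hQ hKQ using fun i => Config.exists_gw_eq_inl_of_receivingSt (hdead.2 ⟨i, hh i⟩)
  by_cases hinp : ∃ i p a q', (Q i, ⟨p, hh i, .inp, a⟩, q') ∈ (S i).delta (hh i)
  · obtain ⟨i, p, a, q', hδ⟩ := hinp
    exact hS i _ (hsys i) (hdead.toSys (hnomix i) (hQ i) hδ rfl)
  · push Not at hinp
    exact hKfree _ hpol (hdead.toPolicy hK hQ hKQ hinp)

open CFSM in
/-- PaI multicomposition preserves deadlock-freeness, provided the
interfaces have no mixed states and the connection policy is deadlock-free. -/
theorem deadlockFree_preserved_by_multicomposition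
    {I : Type} [Finite I] {P : I → Type} [∀ i, Finite (P i)] {A : Type} [Finite A]
    (S : ∀ i, CS (P i) A)
    (hfin : ∀ i p, Finite ((S i).St p))
    (hwf : ∀ i, (S i).WellFormed)
    (hh : ∀ i, P i)
    (hnomix : ∀ i, NoMixed ((S i).delta (hh i)))
    (CM : Set (I × A × I)) (hCM : IsConnModel S hh CM)
    (Kd : ∀ i, Set ((S i).St (hh i) × Act I A × (S i).St (hh i)))
    (hK : IsConnPolicy S hh CM Kd)
    (hS : ∀ i, DeadlockFree (S i))
    (hKfree : DeadlockFree (policyCS S hh Kd)) :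
    DeadlockFree (MC S hh Kd) :=
  deadlockFree_preserved_by_multicomposition_general S hh hnomix CM Kd hK hS hKfree
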